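/- For any positive integer d, let T = (ζ_i^{j−1})_{i,j=1}^{d} be the Vandermonde matrix of the points ζ_k = 2 cos(π(2k−1)/(2d)). Then there exists a matrix S ∈ SL_d(ℤ) such that the matrix T̃ = T S satisfies: (i) every entry t̃_{i,j} of T̃ has absolute value |t̃_{i,j}| ≤ 2, and (ii) T̃^⊤ T̃ = diag(d, 2d, …, 2d). In particular, the Chebyshev-Frolov lattice T(ℤ^d) is orthogonal. -/

import Mathlib

open Matrix

/-- The Vandermonde matrix of the points `ζ_k = 2 cos(π(2k−1)/(2d))`, `k = 1, …, d`. -/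
noncomputable def chebVandermonde (d : ℕ) : Matrix (Fin d) (Fin d) ℝ :=
  Matrix.of fun i j =>
    (2 * Real.cos (Real.pi * (2 * ((i : ℕ) + 1 : ℝ) - 1) / (2 * (d : ℝ)))) ^ (j : ℕ)

/-!
The rescaled Chebyshev polynomials `C_j`, with `C_j(2x) = 2 T_j(x)`, are monic of degree `j`
with integer coefficients for `j ≥ 1`. Replacing `C_0 = 2` by `1`, their coefficient matrix `S`
is unitriangular, and the Vandermonde matrix times `S` has entries `w_j T_j(x_i)`, where
`w_0 = 1`, `w_j = 2`, and `x_i = cos((2i+1)π/(2d))` are the zeros of `T_d`. These entries lie in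
`[-2, 2]`. The columns are orthogonal because Gauss–Chebyshev quadrature at the zeros of `T_d` is
exact in degree `< 2d`, so the discrete inner products of the `T_j` equal their continuous ones
against `(1 - x²)^(-1/2) dx`.
-/

open Polynomial Real

namespace Polynomial.Chebyshev

theorem natDegree_C_int (n : ℤ) : (C ℤ n).natDegree = n.natAbs := by
  have h := congrArg natDegree (C_comp_two_mul_X ℤ n)
  rwa [natDegree_comp, ← Polynomial.C_ofNat, natDegree_C_mul two_ne_zero,
    natDegree_C_mul two_ne_zero, natDegree_X, mul_one, natDegree_T] at h

theorem monic_C_int {n : ℤ} (hn : n ≠ 0) : (C ℤ n).Monic := by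
  have h := congrArg leadingCoeff (C_comp_two_mul_X ℤ n)
  rw [← Polynomial.C_ofNat, leadingCoeff_comp (by rw [natDegree_C_mul_X _ two_ne_zero]; simp),
    natDegree_C_int, leadingCoeff_C_mul_X, leadingCoeff_mul, leadingCoeff_C, leadingCoeff_T,
    ← pow_succ', Nat.sub_add_cancel (Int.natAbs_pos.2 hn)] at h
  exact (mul_eq_right₀ (by positivity)).1 h

variable (R : Type*) [CommRing R]

theorem monic_C {n : ℤ} (hn : n ≠ 0) : (C R n).Monic :=
  map_C (Int.castRingHom R) n ▸ (monic_C_int hn).map _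

theorem natDegree_C [Nontrivial R] (n : ℤ) : (C R n).natDegree = n.natAbs := by
  rcases eq_or_ne n 0 with rfl | hn
  · simp
  · rw [← map_C (Int.castRingHom R), (monic_C_int hn).natDegree_map, natDegree_C_int]

end Polynomial.Chebyshev

open Polynomial.Chebyshev

noncomputable def chebFrolovPoly (R : Type*) [CommRing R] (j : ℕ) : R[X] :=
  if j = 0 then 1 else Chebyshev.C R j

section chebFrolovPoly

variable (R : Type*) [CommRing R]

theorem monic_chebFrolovPoly (j : ℕ) : (chebFrolovPoly R j).Monic := by
  unfold chebFrolovPoly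
  split_ifs with hj
  · exact monic_one
  · exact monic_C R (by exact_mod_cast hj)

theorem natDegree_chebFrolovPoly [Nontrivial R] (j : ℕ) : (chebFrolovPoly R j).natDegree = j := by
  unfold chebFrolovPoly
  split_ifs with hj
  · simp [hj]
  · simp [natDegree_C]

theorem map_chebFrolovPoly {S : Type*} [CommRing S] (f : R →+* S) (j : ℕ) :
    (chebFrolovPoly R j).map f = chebFrolovPoly S j := by
  unfold chebFrolovPoly
  split_ifs <;> simp [Chebyshev.map_C]

theorem eval_two_mul_chebFrolovPoly (j : ℕ) (x : R) :
    (chebFrolovPoly R j).eval (2 * x) = (if j = 0 then 1 else 2) * (T R j).eval x := by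
  unfold chebFrolovPoly
  split_ifs with hj
  · simp [hj]
  · simpa using congrArg (eval x) (C_comp_two_mul_X R j)

end chebFrolovPoly

noncomputable def chebNode (n i : ℕ) : ℝ := cos ((2 * i + 1) / (2 * n) * π)

theorem sum_eval_T_mul_eval_T_chebNode {n j k : ℕ} (hjk : j + k < 2 * n) :
    ∑ i ∈ Finset.range n, (T ℝ j).eval (chebNode n i) *
        (T ℝ k).eval (chebNode n i) =
      if j = k then (if j = 0 then (n : ℝ) else n / 2) else 0 := by
  have hdeg : (T ℝ j * T ℝ k).degree < 2 * n := by
    rw [degree_mul, degree_T, degree_T]; exact_mod_cast hjk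
  have hquad : ∑ i ∈ Finset.range n, (T ℝ j).eval (chebNode n i) *
        (T ℝ k).eval (chebNode n i) =
      n / π * ∫ x, (T ℝ j).eval x * (T ℝ k).eval x ∂measureT := by
    simp_rw [chebNode, ← eval_mul]
    rw [integral_eq_sumZeroes (by omega) hdeg, sumZeroes, ← mul_assoc, div_mul_div_comm,
      mul_comm (n : ℝ), div_self (mul_ne_zero pi_ne_zero (by norm_cast; omega)), one_mul]
  rw [hquad]
  split_ifs with hkj hj0
  · subst hkj hj0
    rw [Nat.cast_zero, integral_eval_T_real_mul_self_measureT_zero]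
    field_simp
  · subst hkj
    rw [integral_T_real_mul_self_measureT_of_ne_zero hj0]
    field_simp
  · rw [integral_eval_T_real_mul_eval_T_real_measureT_of_ne hkj, mul_zero]

noncomputable def chebFrolovBasis (d : ℕ) : Matrix (Fin d) (Fin d) ℤ :=
  of fun i j => (chebFrolovPoly ℤ j).coeff i

theorem det_chebFrolovBasis (d : ℕ) : (chebFrolovBasis d).det = 1 :=
  det_matrixOfPolynomials _ (fun j => natDegree_chebFrolovPoly ℤ j)
    (fun j => monic_chebFrolovPoly ℤ j)

theorem chebVandermonde_eq_vandermonde (d : ℕ) :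
    chebVandermonde d = vandermonde fun i : Fin d => 2 * chebNode d i := by
  ext i j
  simp only [chebVandermonde, vandermonde_apply, of_apply, chebNode]
  ring_nf

theorem chebVandermonde_mul_chebFrolovBasis (d : ℕ) :
    chebVandermonde d * (chebFrolovBasis d).map (Int.cast : ℤ → ℝ) =
      of fun i j : Fin d => (if (j : ℕ) = 0 then 1 else 2) *
        (T ℝ j).eval (chebNode d i) := by
  have hS : (chebFrolovBasis d).map (Int.cast : ℤ → ℝ) =
      of fun i j : Fin d => (chebFrolovPoly ℝ j).coeff i := by
    ext i j
    simp [chebFrolovBasis, ← map_chebFrolovPoly ℤ (Int.castRingHom ℝ)]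
  rw [chebVandermonde_eq_vandermonde, hS,
    ← eval_matrixOfPolynomials_eq_vandermonde_mul_matrixOfPolynomials _ _
      (fun j => (natDegree_chebFrolovPoly ℝ j).le)]
  ext i j
  rw [of_apply, of_apply, eval_two_mul_chebFrolovPoly]

theorem transpose_mul_self_chebVandermonde_mul_chebFrolovBasis (d : ℕ) :
    (chebVandermonde d * (chebFrolovBasis d).map (Int.cast : ℤ → ℝ))ᵀ *
        (chebVandermonde d * (chebFrolovBasis d).map (Int.cast : ℤ → ℝ)) =
      diagonal fun i : Fin d => if (i : ℕ) = 0 then (d : ℝ) else 2 * d := by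
  ext j k
  simp only [chebVandermonde_mul_chebFrolovBasis, mul_apply, transpose_apply, of_apply]
  rw [Finset.sum_congr rfl fun i _ => mul_mul_mul_comm _ _ _ _, ← Finset.mul_sum,
    Fin.sum_univ_eq_sum_range
      (fun i => (T ℝ j).eval (chebNode d i) * (T ℝ k).eval (chebNode d i)),
    sum_eval_T_mul_eval_T_chebNode (by omega)]
  by_cases hjk : j = k
  · subst hjk
    rw [diagonal_apply_eq, if_pos rfl]
    split_ifs <;> ring
  · rw [diagonal_apply_ne _ hjk, if_neg (Fin.val_ne_of_ne hjk), mul_zero]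

theorem chebyshevFrolov_orthogonal_general (d : ℕ) :
    ∃ S : Matrix (Fin d) (Fin d) ℤ, S.det = 1 ∧
      (∀ i j, |(chebVandermonde d * S.map (Int.cast : ℤ → ℝ)) i j| ≤ 2) ∧
      (chebVandermonde d * S.map (Int.cast : ℤ → ℝ))ᵀ *
          (chebVandermonde d * S.map (Int.cast : ℤ → ℝ)) =
        Matrix.diagonal fun i : Fin d => if (i : ℕ) = 0 then (d : ℝ) else 2 * (d : ℝ) := by
  refine ⟨chebFrolovBasis d, det_chebFrolovBasis d, fun i j => ?_,
    transpose_mul_self_chebVandermonde_mul_chebFrolovBasis d⟩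
  have hT : |(T ℝ j).eval (chebNode d i)| ≤ 1 := abs_eval_T_real_le_one _ (abs_cos_le_one _)
  rw [chebVandermonde_mul_chebFrolovBasis, of_apply, abs_mul]
  split_ifs <;> simp only [abs_one, abs_two] <;> linarith

/-- For any positive integer `d` there is `S ∈ SL_d(ℤ)` such that `T̃ = T S` satisfies
`|t̃_{i,j}| ≤ 2` for all entries and `T̃ᵀ T̃ = diag(d, 2d, …, 2d)`; in particular the
Chebyshev-Frolov lattice is orthogonal. -/
theorem chebyshevFrolov_orthogonal (d : ℕ) (hd : 0 < d) :
    ∃ S : Matrix (Fin d) (Fin d) ℤ, S.det = 1 ∧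
      (∀ i j, |(chebVandermonde d * S.map (Int.cast : ℤ → ℝ)) i j| ≤ 2) ∧
      (chebVandermonde d * S.map (Int.cast : ℤ → ℝ))ᵀ *
          (chebVandermonde d * S.map (Int.cast : ℤ → ℝ)) =
        Matrix.diagonal fun i : Fin d => if (i : ℕ) = 0 then (d : ℝ) else 2 * (d : ℝ) :=
  chebyshevFrolov_orthogonal_general d
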